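/- arXiv:1408.2426 — 2 statements merged into one kernel-verified Lean document; each statement's English description precedes it below -/
import Mathlib

section
/- With A, B, C and f as in the hexagon counterexample, for every choice of points S1, S2 in R^2, the extension of f to {A,B,C,0} sending the origin 0 to the unordered pair {S1,S2} has Lipschitz constant at least 1. That is, max over X in {A,B,C} of G({S1,S2}, f(X)) ≥ 1 (note |X| = 1 for each X). -/
noncomputable def Gdist
    (p q : EuclideanSpace ℝ (Fin 2) × EuclideanSpace ℝ (Fin 2)) : ℝ :=
  min (Real.sqrt (‖p.1 - q.1‖ ^ 2 + ‖p.2 - q.2‖ ^ 2))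
      (Real.sqrt (‖p.1 - q.2‖ ^ 2 + ‖p.2 - q.1‖ ^ 2))

noncomputable def P1 : EuclideanSpace ℝ (Fin 2) := !₂[0, 1]
noncomputable def P2 : EuclideanSpace ℝ (Fin 2) := !₂[Real.sqrt 3 / 2, 1 / 2]
noncomputable def P3 : EuclideanSpace ℝ (Fin 2) := !₂[Real.sqrt 3 / 2, -(1 / 2)]
noncomputable def P4 : EuclideanSpace ℝ (Fin 2) := !₂[0, -1]
noncomputable def P5 : EuclideanSpace ℝ (Fin 2) := !₂[-(Real.sqrt 3 / 2), -(1 / 2)]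
noncomputable def P6 : EuclideanSpace ℝ (Fin 2) := !₂[-(Real.sqrt 3 / 2), 1 / 2]

noncomputable def A : EuclideanSpace ℝ (Fin 2) := !₂[0, 1]
noncomputable def B : EuclideanSpace ℝ (Fin 2) := !₂[-(Real.sqrt 3 / 2), -(1 / 2)]
noncomputable def C : EuclideanSpace ℝ (Fin 2) := !₂[Real.sqrt 3 / 2, -(1 / 2)]

/-! For a unit vector `p`, `Gdist (x, y) (p, -p) ^ 2 = ‖x‖ ^ 2 + ‖y‖ ^ 2 + 2 - 2 * |⟪x - y, p⟫|`,
and `‖x - y‖ ≤ ‖x‖ ^ 2 + ‖y‖ ^ 2 + 1`, so `Gdist (x, y) (p, -p) ≥ 1` as soon as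
`2 * |⟪x - y, p⟫| ≤ ‖x - y‖`, i.e. as soon as `x - y` makes an angle of at least `60°` with the
line `ℝ p`. The lines through `P1`, `P2`, `P3` are `60°` apart, so every vector makes such an angle
with one of them; and `f(A)`, `f(B)`, `f(C)` are the antipodal pairs `{P1, -P1}`, `{P2, -P2}`,
`{P3, -P3}`. -/

open RealInnerProductSpace

theorem norm_sub_sq_add_norm_add_sq_of_norm_eq_one {E : Type*} [NormedAddCommGroup E]
    [InnerProductSpace ℝ E] {p : E} (hp : ‖p‖ = 1) (x y : E) :
    ‖x - p‖ ^ 2 + ‖y + p‖ ^ 2 = ‖x‖ ^ 2 + ‖y‖ ^ 2 + 2 - 2 * ⟪x - y, p⟫ := by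
  rw [norm_sub_sq_real, norm_add_sq_real, inner_sub_left, hp]
  ring

theorem norm_sub_le_norm_sq_add_norm_sq_add_one {E : Type*} [SeminormedAddCommGroup E]
    (x y : E) : ‖x - y‖ ≤ ‖x‖ ^ 2 + ‖y‖ ^ 2 + 1 := by
  nlinarith [norm_sub_le x y, sq_nonneg (‖x‖ - 1 / 2), sq_nonneg (‖y‖ - 1 / 2)]

theorem one_le_Gdist_neg {x y p : EuclideanSpace ℝ (Fin 2)} (hp : ‖p‖ = 1)
    (h : 2 * |⟪x - y, p⟫| ≤ ‖x - y‖) : 1 ≤ Gdist (x, y) (p, -p) := by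
  have hxy := norm_sub_le_norm_sq_add_norm_sq_add_one x y
  have hxp := norm_sub_sq_add_norm_add_sq_of_norm_eq_one hp x y
  have hyp := norm_sub_sq_add_norm_add_sq_of_norm_eq_one hp y x
  have hyx : ⟪y - x, p⟫ = -⟪x - y, p⟫ := by rw [← neg_sub, inner_neg_left]
  unfold Gdist
  refine le_min (Real.one_le_sqrt.mpr ?_) (Real.one_le_sqrt.mpr ?_)
  · rw [sub_neg_eq_add, hxp]
    linarith [le_abs_self ⟪x - y, p⟫]
  · rw [sub_neg_eq_add, add_comm, hyp, hyx]
    linarith [neg_abs_le ⟪x - y, p⟫]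

theorem neg_P1 : -P1 = P4 := by
  ext i; fin_cases i <;> simp [P1, P4]

theorem neg_P2 : -P2 = P5 := by
  ext i; fin_cases i <;> simp [P2, P5]

theorem neg_P3 : -P3 = P6 := by
  ext i; fin_cases i <;> simp [P3, P6]

theorem norm_P1 : ‖P1‖ = 1 := by
  simp [EuclideanSpace.norm_eq, P1, Fin.sum_univ_two]

theorem norm_P2 : ‖P2‖ = 1 := by
  simp [EuclideanSpace.norm_eq, P2, Fin.sum_univ_two, div_pow]
  norm_num

theorem norm_P3 : ‖P3‖ = 1 := by
  simp [EuclideanSpace.norm_eq, P3, Fin.sum_univ_two, div_pow]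
  norm_num

theorem inner_P1 (u : EuclideanSpace ℝ (Fin 2)) : ⟪u, P1⟫ = u 1 := by
  simp [PiLp.inner_apply, P1, Fin.sum_univ_two]

theorem inner_P2 (u : EuclideanSpace ℝ (Fin 2)) : ⟪u, P2⟫ = (√3 * u 0 + u 1) / 2 := by
  simp [PiLp.inner_apply, P2, Fin.sum_univ_two]; ring

theorem inner_P3 (u : EuclideanSpace ℝ (Fin 2)) : ⟪u, P3⟫ = (√3 * u 0 - u 1) / 2 := by
  simp [PiLp.inner_apply, P3, Fin.sum_univ_two]; ring

theorem two_mul_abs_inner_le_norm_of_sq_le {E : Type*} [NormedAddCommGroup E]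
    [InnerProductSpace ℝ E] {u p : E}
    (h : (2 * ⟪u, p⟫) ^ 2 ≤ ‖u‖ ^ 2) : 2 * |⟪u, p⟫| ≤ ‖u‖ := by
  simpa [abs_mul] using abs_le_of_sq_le_sq h (norm_nonneg u)

theorem two_mul_abs_inner_le_norm_P1_or_P2_or_P3 (u : EuclideanSpace ℝ (Fin 2)) :
    2 * |⟪u, P1⟫| ≤ ‖u‖ ∨ 2 * |⟪u, P2⟫| ≤ ‖u‖ ∨ 2 * |⟪u, P3⟫| ≤ ‖u‖ := by
  have hu : ‖u‖ ^ 2 = u 0 ^ 2 + u 1 ^ 2 := by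
    simp [EuclideanSpace.real_norm_sq_eq, Fin.sum_univ_two]
  have h3 : √3 ^ 2 = 3 := Real.sq_sqrt (by norm_num)
  by_cases h₂ : u 0 * (u 0 + √3 * u 1) ≤ 0
  · refine Or.inr (Or.inl (two_mul_abs_inner_le_norm_of_sq_le ?_))
    rw [inner_P2, hu]
    nlinarith
  by_cases h₃ : u 0 * (u 0 - √3 * u 1) ≤ 0
  · refine Or.inr (Or.inr (two_mul_abs_inner_le_norm_of_sq_le ?_))
    rw [inner_P3, hu]
    nlinarith
  refine Or.inl (two_mul_abs_inner_le_norm_of_sq_le ?_)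
  have h₁ : 0 < u 0 ^ 2 * (u 0 ^ 2 - 3 * u 1 ^ 2) := by
    rw [← h3]; linear_combination mul_pos (not_le.mp h₂) (not_le.mp h₃)
  rw [inner_P1, hu]
  nlinarith [sq_nonneg (u 0)]

/-- Any candidate value {S1,S2} at the origin is at Wasserstein distance at
least 1 from one of f(A), f(B), f(C); since |A|=|B|=|C|=1, any extension of f
to {A,B,C,0} has Lipschitz constant at least 1. -/
theorem one_point_extension_lipschitz_ge_one
    (S1 S2 : EuclideanSpace ℝ (Fin 2)) :
    1 ≤ max (Gdist (S1, S2) (P1, P4))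
        (max (Gdist (S1, S2) (P2, P5)) (Gdist (S1, S2) (P3, P6))) := by
  rw [← neg_P1, ← neg_P2, ← neg_P3]
  rcases two_mul_abs_inner_le_norm_P1_or_P2_or_P3 (S1 - S2) with h | h | h
  · exact le_max_of_le_left (one_le_Gdist_neg norm_P1 h)
  · exact le_max_of_le_right (le_max_of_le_left (one_le_Gdist_neg norm_P2 h))
  · exact le_max_of_le_right (le_max_of_le_right (one_le_Gdist_neg norm_P3 h))
end

section
/- There is no analog of Kirszbraun's theorem for 2-valued functions: there exist a finite subset B of R^2 and a Lipschitz map f : B → A_2(R^2) (with the Wasserstein metric G) such that every extension of f to B ∪ {0} has Lipschitz constant at least √(3/2) times the Lipschitz constant of f. In particular, f admits no extension to R^2 with the same Lipschitz constant. -/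
/-!
Take for `B` the vertices `w₀, w₁, w₂` of an equilateral triangle inscribed in the unit circle and
`f w = {w, -w}`. Any two values of `f` are at distance `√2` while their arguments are at
distance `√3`, so `f` is `√(2/3)`-Lipschitz. For a value `{p, q}` at the centre `0`,
`G({p, q}, {w, -w})² = ‖p‖² + ‖q‖² + 2 - 2 |⟪p - q, w⟫|`. The three numbers `⟪p - q, wᵢ⟫` sum to
zero, so one of them has absolute value at most `‖p - q‖ / 2`, and by the parallelogram law
`‖p‖² + ‖q‖² + 2 - ‖p - q‖ ≥ ‖p - q‖² / 2 - ‖p - q‖ + 2 ≥ 3/2`. Hence any extension to `0` has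
Lipschitz constant at least `√(3/2) ≥ √(3/2) · √(2/3)`.
-/

open scoped RealInnerProductSpace

lemma Gdist_nonneg (p q : EuclideanSpace ℝ (Fin 2) × EuclideanSpace ℝ (Fin 2)) :
    0 ≤ Gdist p q :=
  le_min (Real.sqrt_nonneg _) (Real.sqrt_nonneg _)

@[simp]
lemma Gdist_self (p : EuclideanSpace ℝ (Fin 2) × EuclideanSpace ℝ (Fin 2)) : Gdist p p = 0 := by
  simp [Gdist]

lemma Gdist_sq_pair_neg (p q x : EuclideanSpace ℝ (Fin 2)) :
    Gdist (p, q) (x, -x) ^ 2 = ‖p‖ ^ 2 + ‖q‖ ^ 2 + 2 * ‖x‖ ^ 2 - 2 * |⟪p - q, x⟫| := by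
  have straight : ‖p - x‖ ^ 2 + ‖q - -x‖ ^ 2 =
      ‖p‖ ^ 2 + ‖q‖ ^ 2 + 2 * ‖x‖ ^ 2 - 2 * ⟪p - q, x⟫ := by
    rw [sub_neg_eq_add, norm_sub_sq_real, norm_add_sq_real, inner_sub_left]; ring
  have crossed : ‖p - -x‖ ^ 2 + ‖q - x‖ ^ 2 =
      ‖p‖ ^ 2 + ‖q‖ ^ 2 + 2 * ‖x‖ ^ 2 - 2 * -⟪p - q, x⟫ := by
    rw [sub_neg_eq_add, norm_sub_sq_real, norm_add_sq_real, inner_sub_left]; ring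
  rw [Gdist, ← Real.sqrt_monotone.map_min, Real.sq_sqrt (by positivity), straight, crossed,
    min_sub_sub_left, ← mul_max_of_nonneg _ _ zero_le_two, ← abs_eq_max_neg]

lemma exists_abs_le_half_of_sum_eq_zero {c : Fin 3 → ℝ} {u : ℝ} (hc : ∑ i, c i = 0)
    (hu : ∀ i, |c i| ≤ u) : ∃ i, |c i| ≤ u / 2 := by
  by_contra! h
  rw [Fin.sum_univ_three] at hc
  have := abs_le.1 (hu 0); have := abs_le.1 (hu 1); have := abs_le.1 (hu 2)
  rcases lt_abs.1 (h 0) with h0 | h0 <;> rcases lt_abs.1 (h 1) with h1 | h1 <;>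
    rcases lt_abs.1 (h 2) with h2 | h2 <;> linarith

lemma exists_sqrt_three_halves_le_Gdist {w : Fin 3 → EuclideanSpace ℝ (Fin 2)}
    (hsum : ∑ i, w i = 0) (hnorm : ∀ i, ‖w i‖ = 1)
    (P : EuclideanSpace ℝ (Fin 2) × EuclideanSpace ℝ (Fin 2)) :
    ∃ i, √(3 / 2) ≤ Gdist P (w i, -w i) := by
  obtain ⟨p, q⟩ := P
  obtain ⟨i, hi⟩ : ∃ i, |⟪p - q, w i⟫| ≤ ‖p - q‖ / 2 := by
    refine exists_abs_le_half_of_sum_eq_zero ?_ fun i => ?_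
    · rw [← inner_sum, hsum, inner_zero_right]
    · simpa [hnorm i] using abs_real_inner_le_norm (p - q) (w i)
  refine ⟨i, Real.sqrt_le_iff.2 ⟨Gdist_nonneg _ _, ?_⟩⟩
  have parallelogram := parallelogram_law_with_norm ℝ p q
  rw [Gdist_sq_pair_neg, hnorm i]
  nlinarith [sq_nonneg (‖p - q‖ - 1), norm_nonneg (p + q)]

noncomputable def triangleVertex : Fin 3 → EuclideanSpace ℝ (Fin 2) :=
  ![!₂[1, 0], !₂[-1 / 2, √3 / 2], !₂[-1 / 2, -(√3 / 2)]]

lemma sum_triangleVertex : ∑ i, triangleVertex i = 0 := by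
  ext k; fin_cases k <;> simp [triangleVertex, Fin.sum_univ_three]; ring

lemma norm_triangleVertex (i : Fin 3) : ‖triangleVertex i‖ = 1 := by
  rw [EuclideanSpace.norm_eq, Real.sqrt_eq_one]
  fin_cases i <;> simp [triangleVertex, Fin.sum_univ_two] <;> ring_nf <;> norm_num

lemma inner_triangleVertex_of_ne {i j : Fin 3} (h : i ≠ j) :
    ⟪triangleVertex i, triangleVertex j⟫ = -1 / 2 := by
  fin_cases i <;> fin_cases j <;> simp_all [triangleVertex, PiLp.inner_apply, Fin.sum_univ_two] <;>
    ring_nf <;> norm_num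

lemma Gdist_pair_neg_triangleVertex (i j : Fin 3) :
    Gdist (triangleVertex i, -triangleVertex i) (triangleVertex j, -triangleVertex j) =
      √(2 / 3) * dist (triangleVertex i) (triangleVertex j) := by
  rcases eq_or_ne i j with rfl | hij
  · simp
  have hG :
      Gdist (triangleVertex i, -triangleVertex i) (triangleVertex j, -triangleVertex j) = √2 := by
    rw [← Real.sqrt_sq (Gdist_nonneg _ _), Gdist_sq_pair_neg, sub_neg_eq_add, ← two_smul ℝ,
      real_inner_smul_left, inner_triangleVertex_of_ne hij, norm_neg, norm_triangleVertex,
      norm_triangleVertex]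
    norm_num
  have hd : dist (triangleVertex i) (triangleVertex j) = √3 := by
    rw [dist_eq_norm, ← Real.sqrt_sq (norm_nonneg _), norm_sub_sq_real,
      inner_triangleVertex_of_ne hij, norm_triangleVertex, norm_triangleVertex]
    norm_num
  rw [hG, hd, ← Real.sqrt_mul (by norm_num)]
  norm_num

/-- Kirszbraun's theorem fails for 2-valued functions: there is a finite set
B ⊆ ℝ² and a map f : B → 𝒜₂(ℝ²) with (exact) Lipschitz constant L > 0 such
that every extension of f to B ∪ {0} has Lipschitz constant at least √(3/2)·L;
in particular f has no extension to all of ℝ² with Lipschitz constant L. -/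
theorem kirszbraun_fails_for_two_valued_maps :
    ∃ (B : Set (EuclideanSpace ℝ (Fin 2))), B.Finite ∧
    ∃ (f : EuclideanSpace ℝ (Fin 2) →
        EuclideanSpace ℝ (Fin 2) × EuclideanSpace ℝ (Fin 2)) (L : ℝ),
      0 < L ∧
      (∀ x ∈ B, ∀ y ∈ B, Gdist (f x) (f y) ≤ L * dist x y) ∧
      (∀ L' : ℝ, (∀ x ∈ B, ∀ y ∈ B, Gdist (f x) (f y) ≤ L' * dist x y) →
        L ≤ L') ∧
      (∀ g : EuclideanSpace ℝ (Fin 2) →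
          EuclideanSpace ℝ (Fin 2) × EuclideanSpace ℝ (Fin 2),
        (∀ x ∈ B, g x = f x) →
        ∀ L' : ℝ,
          (∀ x ∈ B ∪ {0}, ∀ y ∈ B ∪ {0}, Gdist (g x) (g y) ≤ L' * dist x y) →
          Real.sqrt (3 / 2) * L ≤ L') ∧
      ¬ ∃ g : EuclideanSpace ℝ (Fin 2) →
          EuclideanSpace ℝ (Fin 2) × EuclideanSpace ℝ (Fin 2),
          (∀ x ∈ B, g x = f x) ∧
          (∀ x y, Gdist (g x) (g y) ≤ L * dist x y) := by
  set v := triangleVertex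
  have extension_bound : ∀ g : EuclideanSpace ℝ (Fin 2) →
      EuclideanSpace ℝ (Fin 2) × EuclideanSpace ℝ (Fin 2),
      (∀ x ∈ Set.range v, g x = (x, -x)) → ∀ L',
      (∀ x ∈ Set.range v ∪ {0}, ∀ y ∈ Set.range v ∪ {0}, Gdist (g x) (g y) ≤ L' * dist x y) →
        √(3 / 2) * √(2 / 3) ≤ L' := by
    intro g hg L' hL'
    obtain ⟨i, hi⟩ :=
      exists_sqrt_three_halves_le_Gdist sum_triangleVertex norm_triangleVertex (g 0)
    have h0i := hL' 0 (by simp) (v i) (by simp)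
    rw [hg _ (Set.mem_range_self i), dist_zero_left, norm_triangleVertex, mul_one] at h0i
    calc √(3 / 2) * √(2 / 3) = 1 := by rw [← Real.sqrt_mul (by norm_num)]; norm_num
      _ ≤ √(3 / 2) := Real.le_sqrt_of_sq_le (by norm_num)
      _ ≤ L' := hi.trans h0i
  refine ⟨Set.range v, Set.finite_range v, fun x => (x, -x), √(2 / 3), by positivity, ?_, ?_,
    extension_bound, ?_⟩
  · rintro _ ⟨i, rfl⟩ _ ⟨j, rfl⟩
    exact (Gdist_pair_neg_triangleVertex i j).le
  · intro L' h
    have h01 := h (v 0) (Set.mem_range_self 0) (v 1) (Set.mem_range_self 1)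
    rw [Gdist_pair_neg_triangleVertex] at h01
    exact le_of_mul_le_mul_right h01 (dist_pos.2 (by norm_num [v, triangleVertex]))
  · rintro ⟨g, hg, hLip⟩
    have h := extension_bound g hg _ fun x _ y _ => hLip x y
    have : 1 < √(3 / 2) := (Real.lt_sqrt zero_le_one).2 (by norm_num)
    nlinarith [Real.sqrt_pos.2 (by norm_num : (0:ℝ) < 2 / 3)]
end
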